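/- arXiv:2604.16507 — 4 statements merged into one kernel-verified Lean document; each statement's English description precedes it below -/
import Mathlib

section
/- For every prime p with p ≥ 5, the central binomial coefficient satisfies (2p choose p) ≡ 2 (mod p^3). -/
/-!
Vandermonde gives `(2p choose p) = ∑ₖ (p choose k)² = 2 + p² ∑_{0<k<p} cₖ²` with `cₖ = (p choose k) / p`.
Since `k cₖ = (p-1 choose k-1) ≡ ±1 (mod p)`, we get `cₖ² ≡ k⁻²`, so the inner sum is
`≡ ∑_{x ∈ 𝔽ₚ} x⁻² = ∑_{x ∈ 𝔽ₚ} x²`, which vanishes as soon as `2 < p - 1`.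
-/

open Finset

theorem ZMod.cast_choose_pred {p j : ℕ} [Fact p.Prime] (hj : j < p) :
    ((p - 1).choose j : ZMod p) = (-1) ^ j := by
  have hdesc := ZMod.cast_descFactorial (p := p) hj.le
  rw [Nat.descFactorial_eq_factorial_mul_choose, Nat.cast_mul, mul_comm ((-1 : ZMod p) ^ j)]
    at hdesc
  refine mul_left_cancel₀ ?_ hdesc
  rw [Ne, ZMod.natCast_eq_zero_iff, (Fact.out : p.Prime).dvd_factorial]
  omega

theorem ZMod.sum_range_natCast {M : Type*} [AddCommMonoid M] (n : ℕ) [NeZero n]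
    (f : ZMod n → M) : ∑ k ∈ range n, f k = ∑ x : ZMod n, f x := by
  refine sum_nbij' (fun k => (k : ZMod n)) ZMod.val ?_ ?_ ?_ ?_ ?_
  · simp
  · simp [ZMod.val_lt]
  · intro k hk
    exact ZMod.val_cast_of_lt (mem_range.mp hk)
  · simp
  · simp

theorem FiniteField.sum_inv_pow_lt_card_sub_one {K : Type*} [Field K] [Fintype K] {i : ℕ}
    (h : i < Fintype.card K - 1) : ∑ x : K, x⁻¹ ^ i = 0 := by
  rw [Fintype.sum_equiv (Equiv.inv K) (fun x => x⁻¹ ^ i) (· ^ i) fun _ => rfl]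
  exact FiniteField.sum_pow_lt_card_sub_one K i h

theorem Nat.Prime.choose_div_self_mul {p k : ℕ} (hp : p.Prime) (hk : 0 < k) (hkp : k < p) :
    p.choose k / p * k = (p - 1).choose (k - 1) := by
  have hpascal := Nat.add_one_mul_choose_eq (p - 1) (k - 1)
  rw [Nat.sub_add_cancel hp.one_le, Nat.sub_add_cancel hk,
    ← Nat.mul_div_cancel' (hp.dvd_choose_self hk.ne' hkp), mul_assoc] at hpascal
  exact (Nat.eq_of_mul_eq_mul_left hp.pos hpascal).symm

theorem ZMod.cast_choose_div_self_sq {p k : ℕ} [Fact p.Prime] (hk : 0 < k) (hkp : k < p) :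
    ((p.choose k / p : ℕ) : ZMod p) ^ 2 = ((k : ZMod p)⁻¹) ^ 2 := by
  have hp : p.Prime := Fact.out
  have hk0 : (k : ZMod p) ≠ 0 := by
    rw [Ne, ZMod.natCast_eq_zero_iff]
    exact fun hdvd => absurd (Nat.le_of_dvd hk hdvd) (by omega)
  have hmul := congrArg (fun n : ℕ => (n : ZMod p)) (hp.choose_div_self_mul hk hkp)
  simp only [Nat.cast_mul, ZMod.cast_choose_pred (show k - 1 < p by omega)] at hmul
  rw [(eq_mul_inv_iff_mul_eq₀ hk0).mpr hmul, mul_pow, ← pow_mul, mul_comm (k - 1), pow_mul,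
    neg_one_sq, one_pow, one_mul]

theorem Nat.Prime.dvd_sum_choose_div_self_sq {p : ℕ} (hp : p.Prime) (hp3 : 3 < p) :
    p ∣ ∑ k ∈ Ico 1 p, (p.choose k / p) ^ 2 := by
  have : Fact p.Prime := ⟨hp⟩
  rw [← ZMod.natCast_eq_zero_iff]
  push_cast
  calc ∑ k ∈ Ico 1 p, ((p.choose k / p : ℕ) : ZMod p) ^ 2
      = ∑ k ∈ Ico 1 p, ((k : ZMod p))⁻¹ ^ 2 :=
        sum_congr rfl fun k hk => ZMod.cast_choose_div_self_sq (mem_Ico.mp hk).1 (mem_Ico.mp hk).2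
    _ = ∑ k ∈ range p, ((k : ZMod p))⁻¹ ^ 2 := by
        -- the extra `k = 0` term is `0⁻¹ ^ 2 = 0`
        rw [range_eq_Ico, sum_eq_sum_Ico_succ_bot hp.pos]
        simp
    _ = ∑ x : ZMod p, x⁻¹ ^ 2 := ZMod.sum_range_natCast p fun x => x⁻¹ ^ 2
    _ = 0 := FiniteField.sum_inv_pow_lt_card_sub_one (by rw [ZMod.card]; omega)

theorem Nat.Prime.choose_two_mul_self {p : ℕ} (hp : p.Prime) :
    (2 * p).choose p = 2 + p ^ 2 * ∑ k ∈ Ico 1 p, (p.choose k / p) ^ 2 := by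
  rw [← Nat.sum_range_choose_sq, sum_range_succ, range_eq_Ico, sum_eq_sum_Ico_succ_bot hp.pos,
    mul_sum]
  have hinner : ∀ k ∈ Ico 1 p, p.choose k ^ 2 = p ^ 2 * (p.choose k / p) ^ 2 := fun k hk => by
    obtain ⟨hk1, hkp⟩ := mem_Ico.mp hk
    rw [← mul_pow, Nat.mul_div_cancel' (hp.dvd_choose_self (by omega) hkp)]
  rw [sum_congr rfl hinner]
  simp only [Nat.choose_zero_right, Nat.choose_self]
  ring

theorem wolstenholme (p : ℕ) (hp : p.Prime) (h5 : 5 ≤ p) :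
    (p : ℤ)^3 ∣ (Nat.choose (2 * p) p : ℤ) - 2 := by
  obtain ⟨m, hm⟩ := hp.dvd_sum_choose_div_self_sq (by omega)
  refine ⟨m, ?_⟩
  rw [hp.choose_two_mul_self, hm]
  push_cast
  ring
end

section
/- For every prime p with p ≥ 5, p^3 divides the integer ∏_{k=1}^{p−1}(p+k) − (p−1)!. -/
open Finset

@[to_additive]
lemma my_prod_Ioc_reflect {M : Type*} [CommMonoid M] (m : ℕ) (f : ℕ → M) :
    ∏ k ∈ Finset.Ioc m (2*m), f k = ∏ k ∈ Finset.Ioc 0 m, f (2*m+1-k) := by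
  refine Finset.prod_nbij' (fun k => 2*m+1-k) (fun k => 2*m+1-k) ?_ ?_ ?_ ?_ ?_ <;>
      intro a ha <;> simp only [Finset.mem_Ioc] at ha ⊢
  · omega
  · omega
  · omega
  · omega
  · congr 1; omega

@[to_additive]
lemma my_prod_Ioc_pair {M : Type*} [CommMonoid M] (m : ℕ) (f : ℕ → M) :
    ∏ k ∈ Finset.Ioc 0 (2*m), f k = ∏ k ∈ Finset.Ioc 0 m, (f k * f (2*m+1-k)) := by
  rw [← Finset.prod_Ioc_consecutive f (Nat.zero_le m) (by omega : m ≤ 2*m),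
    my_prod_Ioc_reflect, Finset.prod_mul_distrib]

lemma my_sum_inv_sq (p : ℕ) (hp : p.Prime) (h5 : 5 ≤ p) (m : ℕ) (hm : p = 2*m+1) :
    ∑ k ∈ Finset.Ioc 0 m, ((k : ZMod p)⁻¹)^2 = 0 := by
  haveI : Fact p.Prime := ⟨hp⟩
  have hne : ∀ k : ℕ, 0 < k → k < p → ((k : ZMod p)) ≠ 0 := by
    intro k h1 h2 h
    rw [ZMod.natCast_eq_zero_iff] at h
    exact absurd (Nat.le_of_dvd h1 h) (by omega)
  have hpow : ∀ x : ZMod p, x ≠ 0 → (x⁻¹)^2 = x^(p-3) := by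
    intro x hx
    have h1 : x^(p-3) * x^2 = 1 := by
      rw [← pow_add, show (p-3) + 2 = p - 1 by omega]
      exact ZMod.pow_card_sub_one_eq_one hx
    rw [inv_pow]
    exact inv_eq_of_mul_eq_one_left h1
  have hfull : ∑ k ∈ Finset.Ioc 0 (2*m), ((k : ZMod p)⁻¹)^2 = 0 := by
    have h1 : ∑ k ∈ Finset.Ioc 0 (2*m), ((k : ZMod p)⁻¹)^2
        = ∑ k ∈ Finset.Ioc 0 (2*m), ((k : ZMod p))^(p-3) := by
      refine Finset.sum_congr rfl fun k hk => ?_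
      simp only [Finset.mem_Ioc] at hk
      exact hpow _ (hne k hk.1 (by omega))
    have hrange : Finset.range p = insert 0 (Finset.Ioc 0 (2*m)) := by
      ext x; simp only [Finset.mem_range, Finset.mem_insert, Finset.mem_Ioc]; omega
    have h2 : ∑ k ∈ Finset.range p, ((k : ZMod p))^(p-3)
        = ∑ x : ZMod p, x^(p-3) := by
      refine Finset.sum_nbij' (fun k => (k : ZMod p)) (fun x => x.val) ?_ ?_ ?_ ?_ ?_
      · intro a _; exact Finset.mem_univ _
      · intro a _; exact Finset.mem_range.2 (ZMod.val_lt a)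
      · intro a ha; exact ZMod.val_cast_of_lt (Finset.mem_range.1 ha)
      · intro a _; simp [ZMod.natCast_val, ZMod.cast_id]
      · intro a _; rfl
    have h3 : ∑ x : ZMod p, x^(p-3) = 0 :=
      FiniteField.sum_pow_lt_card_sub_one (K := ZMod p) (p-3) (by rw [ZMod.card]; omega)
    rw [h1, ← h3, ← h2, hrange, Finset.sum_insert (by simp),
      Nat.cast_zero, zero_pow (by omega), zero_add]
  rw [my_sum_Ioc_pair] at hfull
  have hrefl : ∀ k ∈ Finset.Ioc 0 m,
      (((2*m+1-k : ℕ) : ZMod p)⁻¹)^2 = ((k : ZMod p)⁻¹)^2 := by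
    intro k hk
    simp only [Finset.mem_Ioc] at hk
    have hneg : ((2*m+1-k : ℕ) : ZMod p) = -(k : ZMod p) := by
      have h0 : (2*m+1-k) + k = p := by omega
      have h := congrArg (Nat.cast : ℕ → ZMod p) h0
      push_cast at h
      rw [ZMod.natCast_self] at h
      exact eq_neg_of_add_eq_zero_left h
    rw [hneg, inv_neg, neg_sq]
  have h2S : (2 : ZMod p) * ∑ k ∈ Finset.Ioc 0 m, ((k : ZMod p)⁻¹)^2 = 0 := by
    rw [Finset.mul_sum, ← hfull]
    refine Finset.sum_congr rfl fun k hk => ?_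
    rw [hrefl k hk]; ring
  have h2ne : (2 : ZMod p) ≠ 0 := by
    have := hne 2 (by norm_num) (by omega)
    simpa using this
  exact (mul_eq_zero.1 h2S).resolve_left h2ne

lemma my_prod_add_sq (s : Finset ℕ) (a : ℕ → ℤ) (c : ℤ) :
    ∃ e : ℤ, ∏ i ∈ s, (a i + c) =
      ∏ i ∈ s, a i + c * ∑ i ∈ s, ∏ j ∈ s.erase i, a j + c^2 * e := by
  classical
  induction s using Finset.induction_on with
  | empty => exact ⟨0, by simp⟩
  | @insert i s hi ih =>
    obtain ⟨e, he⟩ := ih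
    refine ⟨a i * e + (∑ j ∈ s, ∏ k ∈ s.erase j, a k) + c * e, ?_⟩
    have hsum : ∑ j ∈ insert i s, ∏ k ∈ (insert i s).erase j, a k =
        ∏ k ∈ s, a k + a i * ∑ j ∈ s, ∏ k ∈ s.erase j, a k := by
      rw [Finset.sum_insert hi, Finset.erase_insert hi, Finset.mul_sum]
      congr 1
      refine Finset.sum_congr rfl fun j hj => ?_
      rw [Finset.erase_insert_of_ne (by rintro rfl; exact hi hj),
        Finset.prod_insert (fun h => hi (Finset.mem_of_mem_erase h))]
    rw [Finset.prod_insert hi, Finset.prod_insert hi, he, hsum]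
    ring

lemma my_key_dvd (p : ℕ) (hp : p.Prime) (h5 : 5 ≤ p) (m : ℕ) (hm : p = 2*m+1) :
    (p : ℤ) ∣ ∑ k ∈ Finset.Ioc 0 m, ∏ j ∈ (Finset.Ioc 0 m).erase k,
      ((j : ℤ) * ((p : ℤ) - (j : ℤ))) := by
  haveI : Fact p.Prime := ⟨hp⟩
  rw [← ZMod.intCast_zmod_eq_zero_iff_dvd]
  push_cast
  have hcard : ∀ k ∈ Finset.Ioc 0 m, ((Finset.Ioc 0 m).erase k).card = m - 1 := by
    intro k hk
    rw [Finset.card_erase_of_mem hk, Nat.card_Ioc]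
    omega
  have hne : ∀ k : ℕ, k ∈ Finset.Ioc 0 m → ((k : ZMod p)) ≠ 0 := by
    intro k hk h
    simp only [Finset.mem_Ioc] at hk
    rw [ZMod.natCast_eq_zero_iff] at h
    exact absurd (Nat.le_of_dvd hk.1 h) (by omega)
  calc ∑ k ∈ Finset.Ioc 0 m, ∏ j ∈ (Finset.Ioc 0 m).erase k,
        ((j : ZMod p) * ((p : ZMod p) - (j : ZMod p)))
      = ∑ k ∈ Finset.Ioc 0 m, ((-1)^(m-1) * ∏ j ∈ (Finset.Ioc 0 m).erase k,
        ((j : ZMod p))^2) := by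
        refine Finset.sum_congr rfl fun k hk => ?_
        rw [← hcard k hk, ← Finset.prod_const, ← Finset.prod_mul_distrib]
        refine Finset.prod_congr rfl fun j hj => ?_
        rw [ZMod.natCast_self]
        ring
    _ = (-1)^(m-1) * ((∏ j ∈ Finset.Ioc 0 m, ((j : ZMod p))^2) *
        ∑ k ∈ Finset.Ioc 0 m, ((k : ZMod p)⁻¹)^2) := by
        rw [← Finset.mul_sum]
        congr 1
        rw [Finset.mul_sum]
        refine Finset.sum_congr rfl fun k hk => ?_
        rw [← Finset.mul_prod_erase _ _ hk, inv_pow,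
          mul_comm ((k : ZMod p)^2), mul_assoc,
          mul_inv_cancel₀ (pow_ne_zero 2 (hne k hk)), mul_one]
    _ = 0 := by rw [my_sum_inv_sq p hp h5 m hm, mul_zero, mul_zero]

theorem prod_shift_sub_factorial (p : ℕ) (hp : p.Prime) (h5 : 5 ≤ p) :
    (p : ℤ)^3 ∣ (∏ k ∈ Finset.Icc 1 (p - 1), ((p : ℤ) + (k : ℤ))) - (Nat.factorial (p - 1) : ℤ) := by
  obtain ⟨m, hm⟩ : ∃ m, p = 2*m+1 := by
    have := hp.odd_of_ne_two (by omega)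
    obtain ⟨m, hm⟩ := this
    exact ⟨m, by omega⟩
  have hm2 : 2 ≤ m := by omega
  have hp1 : p - 1 = 2*m := by omega
  -- rewrite the product in paired form
  have hprod : (∏ k ∈ Finset.Icc 1 (p - 1), ((p : ℤ) + (k : ℤ)))
      = ∏ k ∈ Finset.Ioc 0 m, ((k : ℤ) * ((p:ℤ) - (k:ℤ)) + 2*(p:ℤ)^2) := by
    rw [hp1, show Finset.Icc 1 (2*m) = Finset.Ioc 0 (2*m) from (Finset.Icc_add_one_left_eq_Ioc 0 (2*m)),
      my_prod_Ioc_pair]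
    refine Finset.prod_congr rfl fun k hk => ?_
    simp only [Finset.mem_Ioc] at hk
    have : ((2*m+1-k : ℕ) : ℤ) = (p : ℤ) - (k : ℤ) := by
      have : (2*m+1-k : ℕ) = p - k := by omega
      rw [this]
      push_cast [Nat.cast_sub (by omega : k ≤ p)]
      ring
    rw [this]
    ring
  have hfact : ((Nat.factorial (p-1) : ℕ) : ℤ)
      = ∏ k ∈ Finset.Ioc 0 m, ((k : ℤ) * ((p:ℤ) - (k:ℤ))) := by
    have h1 : Nat.factorial (p-1) = ∏ i ∈ Finset.Ioc 0 (2*m), i := by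
      rw [← Finset.prod_Ico_id_eq_factorial (p-1)]
      congr 1
      rw [Finset.Ico_add_one_right_eq_Icc]
      ext x; simp only [Finset.mem_Icc, Finset.mem_Ioc]; omega
    rw [h1, Nat.cast_prod, my_prod_Ioc_pair m (fun k => (k : ℤ))]
    refine Finset.prod_congr rfl fun k hk => ?_
    simp only [Finset.mem_Ioc] at hk
    congr 1
    push_cast [Nat.cast_sub (by omega : k ≤ 2*m+1)]
    rw [hm]; push_cast; ring
  obtain ⟨e, he⟩ := my_prod_add_sq (Finset.Ioc 0 m)
    (fun k => (k : ℤ) * ((p:ℤ) - (k:ℤ))) (2*(p:ℤ)^2)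
  obtain ⟨t, ht⟩ := my_key_dvd p hp h5 m hm
  refine ⟨2*t + 4*(p:ℤ)*e, ?_⟩
  rw [hprod, hfact, he, ht]
  ring
end

section
/- For every prime p with p ≥ 5, p^2 divides the integer S₁ = ∑_{j=1}^{p−1} ∏_{k=1, k≠j}^{p−1} k. -/
/-!
Modulo `p²` every `j` with `0 < j < p` is invertible and `∏_{k ≠ j} k = (∏ k) · j⁻¹`, so it suffices
to show Wolstenholme's congruence `∑_{0<j<p} j⁻¹ = 0` in `ZMod (p²)`. Pairing `j` with `p - j` and
using `p² = 0` gives `j⁻¹ + (p - j)⁻¹ = -p j⁻²`, so `2 ∑ j⁻¹ = -p ∑ j⁻²`; the right side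
vanishes because inversion permutes the units mod `p`, so `∑ j⁻² ≡ ∑ j² ≡ 0 (mod p)` once
`2 < p - 1`.
-/

open Finset

theorem FiniteField.sum_inv_pow_eq_zero {K : Type*} [Field K] [Fintype K] {i : ℕ}
    (hi : i < Fintype.card K - 1) : ∑ x : K, x⁻¹ ^ i = 0 :=
  (Equiv.sum_comp (Equiv.inv K) (· ^ i)).trans (sum_pow_lt_card_sub_one K i hi)

theorem Finset.sum_Ico_one_natCast_sub {R M : Type*} [AddGroupWithOne R] [AddCommMonoid M]
    (f : R → M) (p : ℕ) : ∑ j ∈ Ico 1 p, f (p - j) = ∑ j ∈ Ico 1 p, f j := by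
  have h := sum_Ico_reflect (fun j : ℕ => f j) 1 (Nat.le_succ p)
  rw [Nat.add_sub_cancel_left, Nat.add_sub_cancel] at h
  rw [← h]
  exact sum_congr rfl fun j hj => by rw [Nat.cast_sub (mem_Ico.mp hj).2.le]

namespace ZMod

theorem sum_range_natCast_s7 {M : Type*} [AddCommMonoid M] (n : ℕ) [NeZero n] (f : ZMod n → M) :
    ∑ j ∈ range n, f j = ∑ x, f x := by
  refine sum_nbij' (↑) val (by simp) (fun x _ => by simpa using val_lt x) (fun j hj => ?_)
    (fun x _ => natCast_zmod_val x) (fun _ _ => rfl)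
  exact val_cast_of_lt (mem_range.mp hj)

theorem sum_Ico_inv_pow_eq_zero {p : ℕ} [Fact p.Prime] {i : ℕ} (hi0 : 0 < i) (hi : i < p - 1) :
    ∑ j ∈ Ico 1 p, ((j : ZMod p)⁻¹) ^ i = 0 := by
  have hsum := sum_range_natCast_s7 p fun x : ZMod p => x⁻¹ ^ i
  rw [sum_range_eq_add_Ico _ (Fact.out : p.Prime).pos, FiniteField.sum_inv_pow_eq_zero
    (by rwa [card])] at hsum
  simpa [hi0.ne'] using hsum

theorem natCast_mul_eq_zero_of_castHom_eq_zero {m n : ℕ} {x : ZMod (m * n)}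
    (hx : castHom (dvd_mul_right m n) (ZMod m) x = 0) : (n : ZMod (m * n)) * x = 0 := by
  rw [← intCast_zmod_cast x, map_intCast, intCast_zmod_eq_zero_iff_dvd] at hx
  obtain ⟨c, hc⟩ := hx
  rw [← intCast_zmod_cast x, hc, ← Int.cast_natCast, ← Int.cast_mul,
    intCast_zmod_eq_zero_iff_dvd]
  exact ⟨c, by push_cast; ring⟩

theorem castHom_inv_of_isUnit {m n : ℕ} (h : m ∣ n) {a : ZMod n} (ha : IsUnit a) :
    castHom h (ZMod m) a⁻¹ = (castHom h (ZMod m) a)⁻¹ := by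
  refine (ZMod.inv_eq_of_mul_eq_one _ _ _ ?_).symm
  rw [← map_mul, mul_inv_of_unit a ha, map_one]

theorem inv_sub_eq_of_mul_self_eq_zero {n : ℕ} {a ε : ZMod n} (ha : IsUnit a) (hε : ε * ε = 0) :
    (ε - a)⁻¹ = -(a⁻¹ + ε * a⁻¹ ^ 2) := by
  refine ZMod.inv_eq_of_mul_eq_one _ _ _ ?_
  linear_combination (1 + ε * a⁻¹) * mul_inv_of_unit a ha - a⁻¹ ^ 2 * hε

theorem prod_erase_eq_mul_inv {ι : Type*} [DecidableEq ι] {n : ℕ} {s : Finset ι} {f : ι → ZMod n}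
    {j : ι} (hj : j ∈ s) (hunit : IsUnit (f j)) :
    ∏ k ∈ s.erase j, f k = (∏ k ∈ s, f k) * (f j)⁻¹ := by
  rw [← prod_erase_mul s f hj, mul_assoc, mul_inv_of_unit _ hunit, mul_one]

theorem isUnit_natCast_of_mem_Ico {p j : ℕ} (hp : p.Prime) (hj : j ∈ Ico 1 p) :
    IsUnit (j : ZMod (p * p)) := by
  rw [mem_Ico] at hj
  have hcop := (Nat.coprime_of_lt_prime (by omega) hj.2 hp).symm
  exact (isUnit_iff_coprime j (p * p)).mpr (hcop.mul_right hcop)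

theorem natCast_mul_sum_Ico_inv_sq_eq_zero {p : ℕ} (hp : p.Prime) (h5 : 5 ≤ p) :
    (p : ZMod (p * p)) * ∑ j ∈ Ico 1 p, (j : ZMod (p * p))⁻¹ ^ 2 = 0 := by
  have : Fact p.Prime := ⟨hp⟩
  refine natCast_mul_eq_zero_of_castHom_eq_zero ?_
  rw [map_sum, ← sum_Ico_inv_pow_eq_zero (p := p) two_pos (by omega)]
  refine sum_congr rfl fun j hj => ?_
  rw [map_pow, castHom_inv_of_isUnit _ (isUnit_natCast_of_mem_Ico hp hj), map_natCast]

theorem sum_Ico_inv_eq_zero {p : ℕ} (hp : p.Prime) (h5 : 5 ≤ p) :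
    ∑ j ∈ Ico 1 p, (j : ZMod (p * p))⁻¹ = 0 := by
  have hpp : (p : ZMod (p * p)) * p = 0 := by rw [← Nat.cast_mul, natCast_self]
  have htwo : IsUnit (2 : ZMod (p * p)) := by
    have hcop := (Nat.coprime_primes Nat.prime_two hp).mpr (by omega)
    exact_mod_cast (isUnit_iff_coprime 2 (p * p)).mpr (hcop.mul_right hcop)
  refine htwo.mul_right_eq_zero.mp ?_
  calc 2 * ∑ j ∈ Ico 1 p, (j : ZMod (p * p))⁻¹
      = ∑ j ∈ Ico 1 p, ((j : ZMod (p * p))⁻¹ + ((p : ZMod (p * p)) - j)⁻¹) := by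
        rw [sum_add_distrib, sum_Ico_one_natCast_sub (·⁻¹), two_mul]
    _ = -((p : ZMod (p * p)) * ∑ j ∈ Ico 1 p, (j : ZMod (p * p))⁻¹ ^ 2) := by
        rw [mul_sum, ← sum_neg_distrib]
        refine sum_congr rfl fun j hj => ?_
        rw [inv_sub_eq_of_mul_self_eq_zero (isUnit_natCast_of_mem_Ico hp hj) hpp]
        ring
    _ = 0 := by rw [natCast_mul_sum_Ico_inv_sq_eq_zero hp h5, neg_zero]

end ZMod

theorem sq_dvd_harmonic_sum (p : ℕ) (hp : p.Prime) (h5 : 5 ≤ p) :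
    (p : ℤ)^2 ∣ ∑ j ∈ Finset.Icc 1 (p - 1), ∏ k ∈ (Finset.Icc 1 (p - 1)).erase j, (k : ℤ) := by
  have hIcc : Icc 1 (p - 1) = Ico 1 p := by ext j; simp only [mem_Icc, mem_Ico]; omega
  rw [sq, ← Nat.cast_mul, ← ZMod.intCast_zmod_eq_zero_iff_dvd, hIcc]
  push_cast
  rw [sum_congr rfl fun j hj =>
      ZMod.prod_erase_eq_mul_inv hj (ZMod.isUnit_natCast_of_mem_Ico hp hj),
    ← mul_sum, ZMod.sum_Ico_inv_eq_zero hp h5, mul_zero]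
end

section
/- For every prime p with p ≥ 5, p divides the integer e₂({1, …, p−1}) = ∑_{1 ≤ i < j ≤ p−1} ∏_{k=1, k≠i, k≠j}^{p−1} k. -/
/-!
Modulo `p` every summand of `e₂` is `(∏ s) / (i * j)`, so `2 e₂ = (p - 1)! ((∑ i⁻¹)² - ∑ i⁻²)`.
As `i ↦ i⁻¹` permutes `(ZMod p)ˣ`, both power sums are `∑ x^k` over the units with `p - 1 ∤ k`
(`k = 1, 2`, using `p ≥ 5`), hence vanish; and `2` is invertible mod `p`.
-/

/-- The second elementary symmetric product of a finite set of naturals, in ℤ: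
`e₂(s) = ∑_{i,j ∈ s, i < j} ∏_{k ∈ s, k ≠ i, k ≠ j} k`. -/
def e2Prod (s : Finset ℕ) : ℤ :=
  ∑ i ∈ s, ∑ j ∈ s.filter (fun j => i < j), ∏ k ∈ (s.erase i).erase j, (k : ℤ)

namespace Finset

variable {ι : Type*}

theorem two_mul_sum_sum_lt_mul [LinearOrder ι] {R : Type*} [CommRing R] (s : Finset ι) (f : ι → R) :
    2 * ∑ i ∈ s, ∑ j ∈ s with i < j, f i * f j = (∑ i ∈ s, f i) ^ 2 - ∑ i ∈ s, f i ^ 2 := by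
  have hswap : ∑ i ∈ s, ∑ j ∈ s with j < i, f i * f j =
      ∑ i ∈ s, ∑ j ∈ s with i < j, f i * f j := by
    simp only [sum_filter]
    rw [sum_comm]
    simp only [mul_comm]
  have hdiag : ∑ i ∈ s, f i ^ 2 = ∑ i ∈ s, ∑ j ∈ s with i = j, f i * f j := by
    refine sum_congr rfl fun i hi => ?_
    rw [sum_filter, sum_ite_eq, if_pos hi, sq]
  have hsplit : (∑ i ∈ s, f i) ^ 2 = ∑ i ∈ s, (∑ j ∈ s with i < j, f i * f j
      + ∑ j ∈ s with j < i, f i * f j + ∑ j ∈ s with i = j, f i * f j) := by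
    rw [sq, sum_mul_sum]
    refine sum_congr rfl fun i _ => ?_
    simp only [sum_filter, ← sum_add_distrib]
    refine sum_congr rfl fun j _ => ?_
    rcases lt_trichotomy i j with h | rfl | h
    · simp [h, h.not_gt, h.ne]
    · simp
    · simp [h, h.not_gt, h.ne']
  rw [hsplit, hdiag, sum_add_distrib, sum_add_distrib, hswap]
  ring

variable [DecidableEq ι] {K : Type*} [Field K]

theorem prod_erase_erase_eq_div (s : Finset ι) (f : ι → K) {i j : ι} (hi : i ∈ s) (hj : j ∈ s)
    (hij : i ≠ j) (hfi : f i ≠ 0) (hfj : f j ≠ 0) :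
    ∏ k ∈ (s.erase i).erase j, f k = (∏ k ∈ s, f k) / (f i * f j) := by
  rw [eq_div_iff (mul_ne_zero hfi hfj), ← mul_prod_erase s f hi,
    ← mul_prod_erase (s.erase i) f (mem_erase.2 ⟨hij.symm, hj⟩)]
  ring

theorem two_mul_sum_sum_lt_prod_erase_erase [LinearOrder ι] (s : Finset ι) (f : ι → K)
    (hf : ∀ i ∈ s, f i ≠ 0) :
    2 * ∑ i ∈ s, ∑ j ∈ s with i < j, ∏ k ∈ (s.erase i).erase j, f k =
      (∏ k ∈ s, f k) * ((∑ i ∈ s, (f i)⁻¹) ^ 2 - ∑ i ∈ s, ((f i)⁻¹) ^ 2) := by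
  have hterm : ∀ i ∈ s, ∀ j ∈ s.filter (i < ·),
      ∏ k ∈ (s.erase i).erase j, f k = (∏ k ∈ s, f k) * ((f i)⁻¹ * (f j)⁻¹) := by
    intro i hi j hj
    obtain ⟨hj, hij⟩ := mem_filter.1 hj
    rw [prod_erase_erase_eq_div s f hi hj hij.ne (hf i hi) (hf j hj), div_eq_mul_inv, mul_inv]
  rw [sum_congr rfl fun i hi => sum_congr rfl (hterm i hi), ← two_mul_sum_sum_lt_mul]
  simp only [← mul_sum]
  ring

end Finset

open Finset

namespace ZMod

variable (p : ℕ) [Fact p.Prime]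

theorem natCast_ne_zero_of_mem_Icc {n : ℕ} (hn : n ∈ Icc 1 (p - 1)) : (n : ZMod p) ≠ 0 := by
  rw [Ne, natCast_eq_zero_iff]
  exact Nat.not_dvd_of_pos_of_lt (mem_Icc.1 hn).1 (by grind [Nat.Prime.pos Fact.out])

theorem sum_Icc_eq_sum_units {M : Type*} [AddCommMonoid M] (g : ZMod p → M) :
    ∑ n ∈ Icc 1 (p - 1), g n = ∑ u : (ZMod p)ˣ, g u :=
  sum_bij' (fun n hn => Units.mk0 n (natCast_ne_zero_of_mem_Icc p hn))
    (fun u _ => (u : ZMod p).val)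
    (fun _ _ => mem_univ _)
    (fun u _ => by grind [u.ne_zero, val_ne_zero, val_lt])
    (fun n hn => by simp [val_cast_of_lt (by grind [Nat.Prime.pos Fact.out] : n < p)])
    (fun u _ => Units.ext (natCast_zmod_val _))
    (fun _ _ => rfl)

theorem sum_Icc_inv_pow_eq_zero {k : ℕ} (hk : ¬p - 1 ∣ k) :
    ∑ n ∈ Icc 1 (p - 1), ((n : ZMod p)⁻¹) ^ k = 0 := by
  rw [sum_Icc_eq_sum_units p (fun x => x⁻¹ ^ k), ← Equiv.sum_comp (Equiv.inv _)]
  simp only [Equiv.inv_apply, Units.val_inv_eq_inv_val, inv_inv]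
  rw [FiniteField.sum_pow_units, ZMod.card, if_neg hk]

end ZMod

theorem prime_dvd_e2 (p : ℕ) (hp : p.Prime) (h5 : 5 ≤ p) :
    (p : ℤ) ∣ e2Prod (Finset.Icc 1 (p - 1)) := by
  have : Fact p.Prime := ⟨hp⟩
  have htwo : (2 : ZMod p) ≠ 0 := by
    exact_mod_cast ZMod.natCast_ne_zero_of_mem_Icc p (n := 2) (by simp; omega)
  rw [← ZMod.intCast_zmod_eq_zero_iff_dvd, e2Prod]
  push_cast
  have hsum := ZMod.sum_Icc_inv_pow_eq_zero p (k := 1) fun h => by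
    have := Nat.le_of_dvd one_pos h; omega
  have hsum_sq := ZMod.sum_Icc_inv_pow_eq_zero p (k := 2) fun h => by
    have := Nat.le_of_dvd two_pos h; omega
  simp only [pow_one] at hsum
  refine (mul_eq_zero.1 ?_).resolve_left htwo
  rw [two_mul_sum_sum_lt_prod_erase_erase _ _ fun n hn => ZMod.natCast_ne_zero_of_mem_Icc p hn,
    hsum, hsum_sq]
  ring
end
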